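/- If D is a digraph whose skeleton is bipartite, then slir(D) ≤ 2. -/

import Mathlib

/- A digraph on vertex set `V` is given by its finite arc set `E ⊆ V × V`
(arcs in both directions between two vertices are allowed, loops are excluded
via explicit hypotheses). -/

/-- The outdegree of a vertex. -/
def outdeg {V : Type*} [DecidableEq V] (E : Finset (V × V)) (v : V) : ℕ :=
  (E.filter fun a => a.1 = v).card

/-- The indegree of a vertex. -/
def indeg {V : Type*} [DecidableEq V] (E : Finset (V × V)) (v : V) : ℕ :=
  (E.filter fun a => a.2 = v).card

/-- The balanced degree of a vertex. -/
def bdeg {V : Type*} [DecidableEq V] (E : Finset (V × V)) (v : V) : ℤ :=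
  (outdeg E v : ℤ) - (indeg E v : ℤ)

/-- A digraph is weak locally irregular if the endpoints of every arc have
different outdegree-indegree pairs. -/
def WeakLI {V : Type*} [DecidableEq V] (E : Finset (V × V)) : Prop :=
  ∀ a ∈ E, (outdeg E a.1, indeg E a.1) ≠ (outdeg E a.2, indeg E a.2)

/-- A digraph is strong locally irregular if the endpoints of every arc have
different balanced degrees. -/
def StrongLI {V : Type*} [DecidableEq V] (E : Finset (V × V)) : Prop :=
  ∀ a ∈ E, bdeg E a.1 ≠ bdeg E a.2

/-- `lirLe E n` : the arcs of `E` admit a coloring with at most `n` colors in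
which every color class induces a weak locally irregular digraph. -/
def lirLe {V : Type*} [DecidableEq V] (E : Finset (V × V)) (n : ℕ) : Prop :=
  ∃ c : V × V → Fin n, ∀ i : Fin n, WeakLI (E.filter fun a => c a = i)

/-- `slirLe E n` : the arcs of `E` admit a coloring with at most `n` colors in
which every color class induces a strong locally irregular digraph. -/
def slirLe {V : Type*} [DecidableEq V] (E : Finset (V × V)) (n : ℕ) : Prop :=
  ∃ c : V × V → Fin n, ∀ i : Fin n, StrongLI (E.filter fun a => c a = i)

/-- The skeleton of a digraph: the simple graph obtained by replacing each arc
or pair of opposite arcs with a single edge. -/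
def skeleton {V : Type*} [DecidableEq V] (E : Finset (V × V)) : SimpleGraph V where
  Adj u v := u ≠ v ∧ ((u, v) ∈ E ∨ (v, u) ∈ E)
  symm := by
    constructor
    intro u v h
    exact ⟨h.1.symm, h.2.elim Or.inr Or.inl⟩
  loopless := by
    constructor
    intro v h
    exact h.1 rfl

/-- `E'` is an orientation of the simple graph `G`: its arcs lie on edges of `G`
and every edge of `G` receives exactly one direction. -/
def IsOrientationOf {V : Type*} [DecidableEq V] (E' : Finset (V × V))
    (G : SimpleGraph V) : Prop :=
  (∀ a ∈ E', G.Adj a.1 a.2) ∧ (∀ u v : V, G.Adj u v → ((u, v) ∈ E' ↔ (v, u) ∉ E'))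

/-- An outdegree-decreasing acyclic digraph: vertices can be linearly ordered so
that every arc goes forward and outdegrees are nonincreasing along the order. -/
def OutdegDecAcyclic {V : Type*} [DecidableEq V] (E : Finset (V × V)) : Prop :=
  ∃ r : V → ℕ, Function.Injective r ∧ (∀ a ∈ E, r a.1 ≤ r a.2) ∧
    ∀ u v : V, r u < r v → outdeg E v ≤ outdeg E u

/-- An indegree-increasing acyclic digraph: vertices can be linearly ordered so
that every arc goes backward and indegrees are nondecreasing along the order. -/
def IndegIncAcyclic {V : Type*} [DecidableEq V] (E : Finset (V × V)) : Prop :=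
  ∃ r : V → ℕ, Function.Injective r ∧ (∀ a ∈ E, r a.2 ≤ r a.1) ∧
    ∀ u v : V, r u ≤ r v → indeg E u ≤ indeg E v

/-!
Colour every arc by the colour of its tail in a proper 2-colouring of the skeleton. In the class
of colour `i` all arcs go from a vertex of colour `i` to one of the other colour, so tails are
sources and heads are sinks: every tail has positive and every head negative balanced degree.
-/

section

variable {V : Type*} [DecidableEq V]

lemma outdeg_pos_of_mem {F : Finset (V × V)} {a : V × V} (ha : a ∈ F) : 0 < outdeg F a.1 :=
  Finset.card_pos.mpr ⟨a, Finset.mem_filter.mpr ⟨ha, rfl⟩⟩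

lemma indeg_pos_of_mem {F : Finset (V × V)} {a : V × V} (ha : a ∈ F) : 0 < indeg F a.2 :=
  Finset.card_pos.mpr ⟨a, Finset.mem_filter.mpr ⟨ha, rfl⟩⟩

variable {F : Finset (V × V)} {p : V → Prop}

lemma indeg_eq_zero_of_directed_cut (hF : ∀ a ∈ F, p a.1 ∧ ¬ p a.2) {v : V} (hv : p v) :
    indeg F v = 0 :=
  Finset.card_eq_zero.mpr <| Finset.filter_eq_empty_iff.mpr fun a ha hav =>
    (hF a ha).2 (hav ▸ hv)

lemma outdeg_eq_zero_of_directed_cut (hF : ∀ a ∈ F, p a.1 ∧ ¬ p a.2) {v : V} (hv : ¬ p v) :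
    outdeg F v = 0 :=
  Finset.card_eq_zero.mpr <| Finset.filter_eq_empty_iff.mpr fun a ha hav =>
    hv (hav ▸ (hF a ha).1)

lemma strongLI_of_directed_cut (hF : ∀ a ∈ F, p a.1 ∧ ¬ p a.2) : StrongLI F := by
  intro a ha
  have htail : 0 < bdeg F a.1 := by
    have := outdeg_pos_of_mem ha
    rw [bdeg, indeg_eq_zero_of_directed_cut hF (hF a ha).1]
    omega
  have hhead : bdeg F a.2 < 0 := by
    have := indeg_pos_of_mem ha
    rw [bdeg, outdeg_eq_zero_of_directed_cut hF (hF a ha).2]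
    omega
  exact (hhead.trans htail).ne'

lemma coloring_skeleton_ne {α : Type*} {E : Finset (V × V)} (hloop : ∀ v : V, (v, v) ∉ E)
    (C : (skeleton E).Coloring α) {u v : V} (huv : (u, v) ∈ E) : C u ≠ C v :=
  C.valid ⟨by rintro rfl; exact hloop u huv, Or.inl huv⟩

end

theorem stmt15 {V : Type*} [DecidableEq V] (E : Finset (V × V))
    (hloop : ∀ v : V, (v, v) ∉ E)
    (hbip : (skeleton E).Colorable 2) :
    slirLe E 2 := by
  obtain ⟨C⟩ := hbip
  refine ⟨fun a => C a.1, fun i => strongLI_of_directed_cut (p := fun v => C v = i) ?_⟩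
  intro a ha
  obtain ⟨haE, htail⟩ := Finset.mem_filter.mp ha
  exact ⟨htail, fun hhead => coloring_skeleton_ne hloop C haE (htail.trans hhead.symm)⟩
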